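/- Suppose τ̂ is a real random variable with τ̂ ∼ N(τ + b, σ²) where the bias b satisfies |b| ≤ b̄ for a known bound b̄ ≥ 0 and σ > 0 is known. Let z_α(r) denote the 1−α quantile of |N(r,1)|. Then the interval [τ̂ − z_α(b̄/σ)·σ, τ̂ + z_α(b̄/σ)·σ] covers τ with probability at least 1 − α. -/

import Mathlib

/-!
Standardizing, the coverage probability is `P(|N(b/σ, 1)| ≤ z)` with `z = z_α(b̄/σ)`, and
`|b/σ| ≤ b̄/σ`. So it suffices that `r ↦ P(|N(r, 1)| ≤ z)` decreases in `|r|`. By symmetry of the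
Gaussian take `0 ≤ m ≤ r`: moving the window `[-z - r, z - r]` of the centered density to
`[-z - m, z - m]` trades the piece `[-z - r, -z - m]` for the piece `[z - r, z - m]`, and the
reflection `x ↦ x - 2z` maps the second onto the first while moving every point farther from `0`.
-/

open MeasureTheory ProbabilityTheory

theorem integral_shifted_interval_le_of_abs_antitone {f : ℝ → ℝ} (hf : Integrable f)
    (hanti : ∀ x y, |x| ≤ |y| → f y ≤ f x) {c m r : ℝ} (hc : 0 ≤ c) (hm : 0 ≤ m) (hmr : m ≤ r) :
    ∫ x in (-c - r)..(c - r), f x ≤ ∫ x in (-c - m)..(c - m), f x := by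
  have hint : ∀ a b : ℝ, IntervalIntegrable f volume a b := fun _ _ => hf.intervalIntegrable
  have hsplit_r : (∫ x in (-c - r)..(c - r), f x) + ∫ x in (c - r)..(c - m), f x
      = ∫ x in (-c - r)..(c - m), f x :=
    intervalIntegral.integral_add_adjacent_intervals (hint _ _) (hint _ _)
  have hsplit_m : (∫ x in (-c - r)..(-c - m), f x) + ∫ x in (-c - m)..(c - m), f x
      = ∫ x in (-c - r)..(c - m), f x :=
    intervalIntegral.integral_add_adjacent_intervals (hint _ _) (hint _ _)
  have hreflect : ∫ x in (c - r)..(c - m), f (x - 2 * c) = ∫ x in (-c - r)..(-c - m), f x := by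
    rw [intervalIntegral.integral_comp_sub_right f (2 * c)]
    congr 1 <;> ring
  have hcompare : ∫ x in (c - r)..(c - m), f (x - 2 * c) ≤ ∫ x in (c - r)..(c - m), f x := by
    refine intervalIntegral.integral_mono_on (by linarith)
      (hf.comp_sub_right (2 * c)).intervalIntegrable (hint _ _) fun x hx => hanti _ _ ?_
    rw [← sq_le_sq]
    nlinarith [hx.2]
  linarith

theorem gaussianPDFReal_le_of_abs_sub_le {μ : ℝ} {v : NNReal} {x y : ℝ}
    (h : |x - μ| ≤ |y - μ|) : gaussianPDFReal μ v y ≤ gaussianPDFReal μ v x := by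
  unfold gaussianPDFReal
  have hsq : (x - μ) ^ 2 ≤ (y - μ) ^ 2 := sq_le_sq.mpr h
  gcongr

theorem gaussianReal_setOf_abs_le_eq_ofReal_integral (m : ℝ) {v : NNReal} (hv : v ≠ 0) {c : ℝ}
    (hc : 0 ≤ c) :
    gaussianReal m v {x | |x| ≤ c}
      = ENNReal.ofReal (∫ x in (-c - m)..(c - m), gaussianPDFReal 0 v x) := by
  have hwindow : {x : ℝ | |x| ≤ c} = Set.Icc (-c) c := by
    ext x
    simp [abs_le]
  have hshift : ∀ x, gaussianPDFReal m v x = gaussianPDFReal 0 v (x - m) := fun x => by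
    rw [gaussianPDFReal_sub, zero_add]
  rw [hwindow, gaussianReal_apply_eq_integral m hv, integral_Icc_eq_integral_Ioc,
    ← intervalIntegral.integral_of_le (by linarith), funext hshift,
    intervalIntegral.integral_comp_sub_right (gaussianPDFReal 0 v)]

theorem gaussianReal_setOf_abs_le_le_of_le {v : NNReal} (hv : v ≠ 0) (c : ℝ) {m r : ℝ}
    (hm : 0 ≤ m) (hmr : m ≤ r) :
    gaussianReal r v {x | |x| ≤ c} ≤ gaussianReal m v {x | |x| ≤ c} := by
  rcases lt_or_ge c 0 with hc | hc
  · have hempty : {x : ℝ | |x| ≤ c} = ∅ :=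
      Set.eq_empty_of_forall_notMem fun x hx => (abs_nonneg x).not_gt (hx.trans_lt hc)
    simp [hempty]
  rw [gaussianReal_setOf_abs_le_eq_ofReal_integral r hv hc,
    gaussianReal_setOf_abs_le_eq_ofReal_integral m hv hc]
  refine ENNReal.ofReal_le_ofReal
    (integral_shifted_interval_le_of_abs_antitone (integrable_gaussianPDFReal 0 v) ?_ hc hm hmr)
  intro x y h
  exact gaussianPDFReal_le_of_abs_sub_le (by simpa using h)

theorem gaussianReal_abs_mean_setOf_abs_le (m : ℝ) (v : NNReal) (c : ℝ) :
    gaussianReal |m| v {x | |x| ≤ c} = gaussianReal m v {x | |x| ≤ c} := by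
  rcases abs_choice m with h | h
  · rw [h]
  rw [h, ← gaussianReal_map_neg, Measure.map_apply measurable_neg
    (measurableSet_le (by fun_prop) (by fun_prop))]
  simp [Set.preimage, abs_neg]

theorem gaussianReal_setOf_abs_le_le_of_abs_le {v : NNReal} (hv : v ≠ 0) (c : ℝ) {m r : ℝ}
    (hmr : |m| ≤ |r|) : gaussianReal r v {x | |x| ≤ c} ≤ gaussianReal m v {x | |x| ≤ c} := by
  rw [← gaussianReal_abs_mean_setOf_abs_le m, ← gaussianReal_abs_mean_setOf_abs_le r]
  exact gaussianReal_setOf_abs_le_le_of_le hv c (abs_nonneg m) hmr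

theorem gaussianReal_standardize {Ω : Type*} [MeasurableSpace Ω] {P : Measure Ω}
    {X : Ω → ℝ} {m σ : ℝ} (hX : HasLaw X (gaussianReal m ⟨σ ^ 2, sq_nonneg σ⟩) P) (hσ : σ ≠ 0)
    (τ : ℝ) : HasLaw (fun ω => (X ω - τ) / σ) (gaussianReal ((m - τ) / σ) 1) P := by
  convert gaussianReal_div_const (gaussianReal_sub_const hX τ) σ
  refine (div_self ?_).symm
  exact NNReal.coe_ne_zero.mp (pow_ne_zero 2 hσ)

theorem stmt16_general {Ω : Type*} [MeasurableSpace Ω] (μ : Measure Ω)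
    (τ b σ bbar α : ℝ) (hσ : 0 < σ) (hb : |b| ≤ bbar)
    (tauhat : Ω → ℝ)
    (hdist : μ.map tauhat = gaussianReal (τ + b) (⟨σ ^ 2, sq_nonneg σ⟩ : NNReal))
    (z : ℝ → ℝ)
    (hz : ∀ r : ℝ, ((gaussianReal r 1) {x | |x| ≤ z r}).toReal = 1 - α) :
    1 - α ≤ (μ {ω | |tauhat ω - τ| ≤ z (bbar / σ) * σ}).toReal := by
  have hlaw : HasLaw tauhat (gaussianReal (τ + b) ⟨σ ^ 2, sq_nonneg σ⟩) μ :=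
    ⟨.of_map_ne_zero (hdist ▸ (instIsProbabilityMeasureGaussianReal _ _).ne_zero), hdist⟩
  have hstd : HasLaw (fun ω => (tauhat ω - τ) / σ) (gaussianReal (b / σ) 1) μ := by
    simpa using gaussianReal_standardize hlaw hσ.ne' τ
  have hcover : {ω | |tauhat ω - τ| ≤ z (bbar / σ) * σ}
      = {ω | |(tauhat ω - τ) / σ| ≤ z (bbar / σ)} := by
    ext ω
    simp only [Set.mem_ofPred_eq, abs_div, abs_of_pos hσ, div_le_iff₀ hσ]
  have hbias : |b / σ| ≤ |bbar / σ| := by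
    rw [abs_div, abs_div, abs_of_pos hσ]
    exact div_le_div_of_nonneg_right (hb.trans (le_abs_self bbar)) hσ.le
  rw [hcover, hstd.measure_eq (p := fun x => |x| ≤ z (bbar / σ))
    (measurableSet_le (by fun_prop) (by fun_prop)), ← hz]
  exact ENNReal.toReal_mono (measure_ne_top _ _)
    (gaussianReal_setOf_abs_le_le_of_abs_le one_ne_zero _ hbias)

/-- Bias-aware confidence interval validity: if τ̂ ∼ N(τ+b, σ²)
with |b| ≤ b̄ and z_α(r) is the 1−α quantile of |N(r,1)|, then the interval
[τ̂ ± z_α(b̄/σ)·σ] covers τ with probability at least 1 − α. -/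
theorem stmt16 {Ω : Type*} [MeasurableSpace Ω] (μ : Measure Ω) [IsProbabilityMeasure μ]
    (τ b σ bbar α : ℝ) (hσ : 0 < σ) (hbbar : 0 ≤ bbar) (hb : |b| ≤ bbar)
    (hα0 : 0 < α) (hα1 : α < 1)
    (tauhat : Ω → ℝ)
    (hdist : μ.map tauhat = gaussianReal (τ + b) (⟨σ ^ 2, sq_nonneg σ⟩ : NNReal))
    (z : ℝ → ℝ)
    (hz : ∀ r : ℝ, ((gaussianReal r 1) {x | |x| ≤ z r}).toReal = 1 - α) :
    1 - α ≤ (μ {ω | |tauhat ω - τ| ≤ z (bbar / σ) * σ}).toReal :=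
  stmt16_general μ τ b σ bbar α hσ hb tauhat hdist z hz
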